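/- arXiv:1702.07211 — 2 statements merged into one kernel-verified Lean document; each statement's English description precedes it below -/
import Mathlib

section
/- For all real β > 1, one has 1/(e^{log(β)/β} − 1) ≤ 2·max(β, β/(β−1)). -/
/-!
Since `eˣ - 1 ≥ x`, the left-hand side is at most `β / log β`, and `log β ≥ 1 - 1/β` bounds this
by `β q` with `q = β / (β - 1)` the conjugate exponent of `β`. Conjugate exponents satisfy
`β q = β + q ≤ 2 max β q`.
-/

open Real

lemma Real.one_div_exp_sub_one_le_one_div {x : ℝ} (hx : 0 < x) : 1 / (exp x - 1) ≤ 1 / x :=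
  one_div_le_one_div_of_le hx (by linarith [add_one_le_exp x])

lemma Real.div_log_le_mul_conjExponent {β : ℝ} (hβ : 1 < β) :
    β / log β ≤ β * conjExponent β := by
  have hβ0 : 0 < β := by linarith
  have hlog : (β - 1) / β ≤ log β := by
    simpa [sub_div, div_self hβ0.ne'] using one_sub_inv_le_log_of_pos hβ0
  calc β / log β ≤ β / ((β - 1) / β) :=
        div_le_div_of_nonneg_left hβ0.le (div_pos (by linarith) hβ0) hlog
    _ = β * conjExponent β := by rw [div_div_eq_mul_div, conjExponent, mul_div_assoc]

lemma Real.HolderConjugate.mul_le_two_mul_max {p q : ℝ} (h : p.HolderConjugate q) :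
    p * q ≤ 2 * max p q := by
  rw [h.mul_eq_add]
  linarith [le_max_left p q, le_max_right p q]

theorem stmt_0 (β : ℝ) (hβ : 1 < β) :
    1 / (Real.exp (Real.log β / β) - 1) ≤ 2 * max β (β / (β - 1)) :=
  calc 1 / (exp (log β / β) - 1) ≤ 1 / (log β / β) :=
        one_div_exp_sub_one_le_one_div (div_pos (log_pos hβ) (by linarith))
    _ = β / log β := one_div_div _ _
    _ ≤ β * conjExponent β := div_log_le_mul_conjExponent hβ
    _ ≤ 2 * max β (conjExponent β) := (HolderConjugate.conjExponent hβ).mul_le_two_mul_max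
end

section
/- In a one-dimensional canonical exponential family with cumulant function b, if the variance b''(θ) is bounded by V > 0 on the parameter set, then for all means μ, μ' in the mean set, the divergence kl(μ, μ') = KL(ν_θ, ν_{θ'}) satisfies kl(μ, μ') ≥ (μ − μ')²/(2V). -/
/-!
The Bregman divergence `D(t) = b t - b θ - b' θ (t - θ)` is the KL divergence. The function
`φ(t) = 2V D(t) - (b' t - b' θ)²` vanishes at `t = θ` and has derivative
`2 (b' t - b' θ) (V - b'' t)`. Since `b'' ≥ 0` makes `b' t - b' θ` carry the sign of `t - θ` and
`b'' ≤ V` makes the second factor nonnegative, `φ` grows as `t` moves away from `θ`, so `φ θ' ≥ 0`.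
Reflecting `t ↦ -t` reduces `θ' < θ` to `θ < θ'`.
-/

open Set

lemma monotoneOn_Icc_of_hasDerivAt_nonneg {g g' : ℝ → ℝ} {a x : ℝ}
    (hg : ∀ t ∈ Icc a x, HasDerivAt g (g' t) t) (hg' : ∀ t ∈ Ioo a x, 0 ≤ g' t) :
    MonotoneOn g (Icc a x) :=
  monotoneOn_of_hasDerivWithinAt_nonneg (convex_Icc a x)
    (fun t ht ↦ (hg t ht).continuousAt.continuousWithinAt)
    (fun t ht ↦ by
      rw [interior_Icc] at ht ⊢
      exact (hg t (Ioo_subset_Icc_self ht)).hasDerivWithinAt)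
    (by rwa [interior_Icc])

lemma sq_deriv_sub_le_two_mul_bregman_of_le {f f' f'' : ℝ → ℝ} {V a x : ℝ} (hax : a ≤ x)
    (hf : ∀ t ∈ Icc a x, HasDerivAt f (f' t) t) (hf' : ∀ t ∈ Icc a x, HasDerivAt f' (f'' t) t)
    (h0 : ∀ t ∈ Icc a x, 0 ≤ f'' t) (hV : ∀ t ∈ Icc a x, f'' t ≤ V) :
    (f' a - f' x) ^ 2 ≤ 2 * V * (f x - f a - f' a * (x - a)) := by
  have hmono : MonotoneOn f' (Icc a x) :=
    monotoneOn_Icc_of_hasDerivAt_nonneg hf' fun t ht ↦ h0 t (Ioo_subset_Icc_self ht)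
  set φ : ℝ → ℝ := fun t ↦ 2 * V * (f t - f a - f' a * (t - a)) - (f' t - f' a) ^ 2
  have hφ : ∀ t ∈ Icc a x, HasDerivAt φ (2 * (f' t - f' a) * (V - f'' t)) t := by
    intro t ht
    refine (((((hf t ht).sub_const (f a)).fun_sub
      (((hasDerivAt_id' t).sub_const a).const_mul (f' a))).const_mul (2 * V)).fun_sub
      (((hf' t ht).sub_const (f' a)).fun_pow 2)).congr_deriv ?_
    ring
  have hφmono : MonotoneOn φ (Icc a x) := by
    refine monotoneOn_Icc_of_hasDerivAt_nonneg hφ fun t ht ↦ ?_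
    have ht' := Ioo_subset_Icc_self ht
    have hμ : f' a ≤ f' t := hmono (left_mem_Icc.2 hax) ht' ht.1.le
    have hVt := hV t ht'
    have : 0 ≤ (f' t - f' a) * (V - f'' t) := mul_nonneg (by linarith) (by linarith)
    linarith
  have := hφmono (left_mem_Icc.2 hax) (right_mem_Icc.2 hax) hax
  simp only [φ, sub_self, mul_zero, zero_pow two_ne_zero] at this
  linarith

lemma sq_deriv_sub_le_two_mul_bregman {f f' f'' : ℝ → ℝ} {V a x : ℝ}
    (hf : ∀ t ∈ uIcc a x, HasDerivAt f (f' t) t) (hf' : ∀ t ∈ uIcc a x, HasDerivAt f' (f'' t) t)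
    (h0 : ∀ t ∈ uIcc a x, 0 ≤ f'' t) (hV : ∀ t ∈ uIcc a x, f'' t ≤ V) :
    (f' a - f' x) ^ 2 ≤ 2 * V * (f x - f a - f' a * (x - a)) := by
  rcases le_total a x with hax | hxa
  · rw [uIcc_of_le hax] at hf hf' h0 hV
    exact sq_deriv_sub_le_two_mul_bregman_of_le hax hf hf' h0 hV
  · rw [uIcc_of_ge hxa] at hf hf' h0 hV
    have hneg : ∀ t ∈ Icc (-a) (-x), -t ∈ Icc x a := fun t ht ↦
      ⟨by linarith [ht.2], by linarith [ht.1]⟩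
    have := sq_deriv_sub_le_two_mul_bregman_of_le (f := fun t ↦ f (-t)) (f' := fun t ↦ -f' (-t))
      (f'' := fun t ↦ f'' (-t)) (V := V) (neg_le_neg hxa)
      (fun t ht ↦ ((hf (-t) (hneg t ht)).comp t (hasDerivAt_neg t)).congr_deriv (mul_neg_one _))
      (fun t ht ↦ ((hf' (-t) (hneg t ht)).comp t (hasDerivAt_neg t)).neg.congr_deriv (by ring))
      (fun t ht ↦ h0 (-t) (hneg t ht)) (fun t ht ↦ hV (-t) (hneg t ht))
    simp only [neg_neg] at this
    linarith
/-- Pinsker-like inequality in a one-dimensional canonical exponential family: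
`b` is the (twice continuously differentiable) cumulant function, with variance
`b'' > 0` bounded above by `V` on the segment between the parameters.  Then the
divergence `kl(μ, μ') = KL(ν_θ, ν_{θ'}) = b θ' - b θ - b' θ (θ' - θ)` between the
members with means `μ = b' θ` and `μ' = b' θ'` satisfies
`kl(μ, μ') ≥ (μ - μ')² / (2V)`. -/
theorem stmt_11 (b : ℝ → ℝ) (V : ℝ) (hV : 0 < V)
    (hb : ContDiff ℝ 2 b)
    (θ θ' : ℝ)
    (hpos : ∀ t ∈ Set.uIcc θ θ', 0 < deriv (deriv b) t)
    (hvar : ∀ t ∈ Set.uIcc θ θ', deriv (deriv b) t ≤ V) :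
    b θ' - b θ - deriv b θ * (θ' - θ) ≥ (deriv b θ - deriv b θ') ^ 2 / (2 * V) := by
  have hb' : Differentiable ℝ b := hb.differentiable (by norm_num)
  have hb'' : Differentiable ℝ (deriv b) := hb.differentiable_deriv_two
  have key := sq_deriv_sub_le_two_mul_bregman (fun t _ ↦ (hb' t).hasDerivAt)
    (fun t _ ↦ (hb'' t).hasDerivAt) (fun t ht ↦ (hpos t ht).le) hvar
  rw [ge_iff_le, div_le_iff₀ (by positivity)]
  linarith
end
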